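/- arXiv:1912.11808 — 10 statements merged into one kernel-verified Lean document; each statement's English description precedes it below -/
import Mathlib

section
/- Let V be a nonempty finite set, f : 2^V → ℝ a set function with f(∅) = 0, and let α < α' be real numbers. Let Q and Q' be partitions of V, and let r, r' : V → ℝ be vectors such that r(Z) = f̂_α(Z) for every nonempty set Z that is a union of blocks of Q, and r'(Z) = f̂_{α'}(Z) for every nonempty set Z that is a union of blocks of Q'. Fix i ∈ V. Then for all sets X, Y ⊆ V, each of which is simultaneously a union of blocks of Q and a union of blocks of Q', with i ∈ X ⊊ Y, the strict strong map inequality holds: (f_α(Y) − r(Y)) − (f_α(X) − r(X)) > (f_{α'}(Y) − r'(Y)) − (f_{α'}(X) − r'(X)). -/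
open Finset

variable {α : Type*}

/-- The residual function `f_α(X) = f(X) - f(V) + α` for nonempty `X`, and `0` on `∅`. -/
noncomputable def resFn [DecidableEq α] (f : Finset α → ℝ) (V : Finset α) (a : ℝ)
    (X : Finset α) : ℝ :=
  if X = ∅ then 0 else f X - f V + a

/-- The partition sum `f_α[P] = Σ_{C ∈ P} f_α(C)`. -/
noncomputable def partSum [DecidableEq α] (f : Finset α → ℝ) (V : Finset α) (a : ℝ)
    {X : Finset α} (P : Finpartition X) : ℝ :=
  ∑ C ∈ P.parts, resFn f V a C

/-- The Dilworth truncation `f̂_α(X) = min over partitions P of X of f_α[P]`. -/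
noncomputable def dilworth [DecidableEq α] (f : Finset α → ℝ) (V : Finset α) (a : ℝ)
    (X : Finset α) : ℝ :=
  sInf {y : ℝ | ∃ P : Finpartition X, partSum f V a P = y}

/-- `X` is a union of blocks of the partition `Q`. -/
def isUnionOfBlocks [DecidableEq α] {V : Finset α} (Q : Finpartition V) (X : Finset α) : Prop :=
  ∃ S ⊆ Q.parts, X = S.sup id

lemma isUnionOfBlocks.sdiff [DecidableEq α] {V : Finset α} {Q : Finpartition V} {X Y : Finset α}
    (hX : isUnionOfBlocks Q X) (hY : isUnionOfBlocks Q Y) :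
    isUnionOfBlocks Q (Y \ X) := by
  obtain ⟨S, hS, rfl⟩ := hX
  obtain ⟨T, hT, rfl⟩ := hY
  refine ⟨T \ S, (Finset.sdiff_subset).trans hT, ?_⟩
  ext x
  simp only [Finset.mem_sdiff, Finset.mem_sup, id_eq]
  constructor
  · rintro ⟨⟨B, hBT, hxB⟩, hna⟩
    exact ⟨B, ⟨hBT, fun hBS => hna ⟨B, hBS, hxB⟩⟩, hxB⟩
  · rintro ⟨B, ⟨hBT, hBS⟩, hxB⟩
    refine ⟨⟨B, hBT, hxB⟩, ?_⟩
    rintro ⟨C, hCS, hxC⟩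
    exact hBS (Q.eq_of_mem_parts (hT hBT) (hS hCS) hxB hxC ▸ hCS)

lemma dilworth_finite [DecidableEq α] (f : Finset α → ℝ) (V : Finset α) (a : ℝ) (W : Finset α) :
    {y : ℝ | ∃ P : Finpartition W, partSum f V a P = y}.Finite := by
  apply Set.Finite.subset
    (Finset.finite_toSet (W.powerset.powerset.image (fun ps => ∑ C ∈ ps, resFn f V a C)))
  rintro y ⟨P, rfl⟩
  simp only [Finset.coe_image, Set.mem_image, Finset.mem_coe, Finset.mem_powerset]
  exact ⟨P.parts, fun C hC => Finset.mem_powerset.2 (P.le hC), rfl⟩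

lemma dilworth_strict [DecidableEq α] (f : Finset α → ℝ) (V : Finset α) {a a' : ℝ}
    (haa' : a < a') {W : Finset α} (hW : W.Nonempty) :
    dilworth f V a W < dilworth f V a' W := by
  set Sa := {y : ℝ | ∃ P : Finpartition W, partSum f V a P = y} with hSa
  set Sa' := {y : ℝ | ∃ P : Finpartition W, partSum f V a' P = y} with hSa'
  have hne : Sa.Nonempty := ⟨_, ⟨Finpartition.indiscrete hW.ne_empty, rfl⟩⟩
  have hne' : Sa'.Nonempty := ⟨_, ⟨Finpartition.indiscrete hW.ne_empty, rfl⟩⟩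
  have hfin := dilworth_finite f V a W
  have key : ∀ P : Finpartition W, partSum f V a' P = partSum f V a P + P.parts.card * (a' - a) := by
    intro P
    have : ∀ C ∈ P.parts, resFn f V a' C = resFn f V a C + (a' - a) := by
      intro C hC
      simp [resFn, (P.nonempty_of_mem_parts hC).ne_empty]
    rw [partSum, Finset.sum_congr rfl this, Finset.sum_add_distrib, Finset.sum_const, ← partSum]
    push_cast
    ring
  have hcard : ∀ P : Finpartition W, (1 : ℝ) ≤ P.parts.card := by
    intro P
    have := Finset.card_pos.2 (P.parts_nonempty hW.ne_empty)
    exact_mod_cast this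
  have hlb : dilworth f V a W + (a' - a) ≤ dilworth f V a' W := by
    apply le_csInf hne'
    rintro y ⟨P, rfl⟩
    have h1 : dilworth f V a W ≤ partSum f V a P := csInf_le hfin.bddBelow ⟨P, rfl⟩
    have h2 := key P
    nlinarith [hcard P]
  linarith

/-- Strict strong map property of the residual functions `f_α(·) − r(·)` in `α`
(Theorem 3 of the paper, with the invariants of Lemma 2 as explicit hypotheses). -/
theorem strict_strong_map [DecidableEq α] (V : Finset α) (hV : V.Nonempty)
    (f : Finset α → ℝ) (hf : f ∅ = 0) (a a' : ℝ) (haa' : a < a')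
    (Q Q' : Finpartition V) (r r' : α → ℝ)
    (hr : ∀ Z : Finset α, Z.Nonempty → isUnionOfBlocks Q Z →
      ∑ v ∈ Z, r v = dilworth f V a Z)
    (hr' : ∀ Z : Finset α, Z.Nonempty → isUnionOfBlocks Q' Z →
      ∑ v ∈ Z, r' v = dilworth f V a' Z)
    (i : α) (hi : i ∈ V) :
    ∀ X Y : Finset α, X ⊆ V → Y ⊆ V →
      isUnionOfBlocks Q X → isUnionOfBlocks Q' X →
      isUnionOfBlocks Q Y → isUnionOfBlocks Q' Y →
      i ∈ X → X ⊂ Y →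
      (resFn f V a Y - ∑ v ∈ Y, r v) - (resFn f V a X - ∑ v ∈ X, r v) >
      (resFn f V a' Y - ∑ v ∈ Y, r' v) - (resFn f V a' X - ∑ v ∈ X, r' v) := by
  intro X Y hXV hYV hQX hQ'X hQY hQ'Y hiX hXY
  have hXne : X.Nonempty := ⟨i, hiX⟩
  have hYne : Y.Nonempty := hXne.mono hXY.subset
  obtain ⟨w, hwY, hwX⟩ := Finset.exists_of_ssubset hXY
  have hWne : (Y \ X).Nonempty := ⟨w, Finset.mem_sdiff.2 ⟨hwY, hwX⟩⟩
  have hrW := hr (Y \ X) hWne (hQX.sdiff hQY)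
  have hr'W := hr' (Y \ X) hWne (hQ'X.sdiff hQ'Y)
  have hsum : ∑ v ∈ Y \ X, r v + ∑ v ∈ X, r v = ∑ v ∈ Y, r v :=
    Finset.sum_sdiff hXY.subset
  have hsum' : ∑ v ∈ Y \ X, r' v + ∑ v ∈ X, r' v = ∑ v ∈ Y, r' v :=
    Finset.sum_sdiff hXY.subset
  have hstrict := dilworth_strict f V haa' hWne
  have e1 : resFn f V a Y = f Y - f V + a := by simp [resFn, hYne.ne_empty]
  have e2 : resFn f V a X = f X - f V + a := by simp [resFn, hXne.ne_empty]
  have e3 : resFn f V a' Y = f Y - f V + a' := by simp [resFn, hYne.ne_empty]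
  have e4 : resFn f V a' X = f X - f V + a' := by simp [resFn, hXne.ne_empty]
  rw [e1, e2, e3, e4]
  linarith
end

section
/- Let V be a finite set, L a nonempty collection of subsets of V that is closed under union and intersection, and h₁, h₂ : L → ℝ set functions such that h₁ is submodular on L (h₁(X) + h₁(Y) ≥ h₁(X ∪ Y) + h₁(X ∩ Y) for all X, Y ∈ L) and h₁, h₂ form a strict strong map: h₁(Y) − h₁(X) > h₂(Y) − h₂(X) for all X, Y ∈ L with X ⊊ Y. Then every minimizer X₁ of h₁ over L is contained in every minimizer X₂ of h₂ over L, i.e., X₁ ⊆ X₂. -/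
open Finset

variable {α : Type*}

/-- Nesting of minimizers under a strict strong map (core of Lemma 4 of the paper):
if `h₁ ↠ h₂` on a lattice family `L` and `h₁` is submodular on `L`, then every
minimizer of `h₁` is contained in every minimizer of `h₂`. -/
theorem strict_strong_map_minimizers_nested [DecidableEq α]
    (V : Finset α) (L : Finset (Finset α))
    (hLne : L.Nonempty) (hLsub : ∀ X ∈ L, X ⊆ V)
    (hUnion : ∀ X ∈ L, ∀ Y ∈ L, X ∪ Y ∈ L)
    (hInter : ∀ X ∈ L, ∀ Y ∈ L, X ∩ Y ∈ L)
    (h₁ h₂ : Finset α → ℝ)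
    (hsub : ∀ X ∈ L, ∀ Y ∈ L, h₁ X + h₁ Y ≥ h₁ (X ∪ Y) + h₁ (X ∩ Y))
    (hmap : ∀ X ∈ L, ∀ Y ∈ L, X ⊂ Y → h₁ Y - h₁ X > h₂ Y - h₂ X)
    (X₁ : Finset α) (hX₁ : X₁ ∈ L ∧ ∀ X ∈ L, h₁ X₁ ≤ h₁ X)
    (X₂ : Finset α) (hX₂ : X₂ ∈ L ∧ ∀ X ∈ L, h₂ X₂ ≤ h₂ X) :
    X₁ ⊆ X₂ := by
  obtain ⟨hX₁L, hX₁min⟩ := hX₁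
  obtain ⟨hX₂L, hX₂min⟩ := hX₂
  by_contra hns
  have hUL : X₁ ∪ X₂ ∈ L := hUnion _ hX₁L _ hX₂L
  have hIL : X₁ ∩ X₂ ∈ L := hInter _ hX₁L _ hX₂L
  have hssub : X₂ ⊂ X₁ ∪ X₂ := by
    constructor
    · exact subset_union_right
    · intro h
      exact hns fun a ha => by
        have := h (mem_union_left _ ha)
        simpa [mem_inter, ha] using mem_inter.mpr ⟨ha, this⟩
  have h1 : h₁ (X₁ ∪ X₂) - h₁ X₂ > h₂ (X₁ ∪ X₂) - h₂ X₂ :=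
    hmap _ hX₂L _ hUL hssub
  have h2 : h₂ X₂ ≤ h₂ (X₁ ∪ X₂) := hX₂min _ hUL
  have h3 : h₁ (X₁ ∪ X₂) > h₁ X₂ := by linarith
  have h4 := hsub _ hX₁L _ hX₂L
  have h5 : h₁ X₁ > h₁ (X₁ ∩ X₂) := by linarith
  have h6 : h₁ X₁ ≤ h₁ (X₁ ∩ X₂) := hX₁min _ hIL
  linarith
end

section
/- Let V be a finite set, L a nonempty collection of subsets of V closed under union and intersection, and h₁, h₂ : L → ℝ set functions such that h₁ is submodular on L and h₁, h₂ form a (non-strict) strong map: h₁(Y) − h₁(X) ≥ h₂(Y) − h₂(X) for all X, Y ∈ L with X ⊆ Y. If X₁ is a minimizer of h₁ over L that is contained in every minimizer of h₁ over L (the minimal minimizer), then X₁ ⊆ X₂ for every minimizer X₂ of h₂ over L. -/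
open Finset

variable {α : Type*}

/-- Nesting of the minimal minimizer under a (non-strict) strong map
(the property underlying Lemma 11 of the paper): if `h₁ → h₂` on a lattice
family `L`, `h₁` is submodular on `L`, and `X₁` is the minimal minimizer of
`h₁` over `L`, then `X₁` is contained in every minimizer of `h₂` over `L`. -/
theorem strong_map_minimal_minimizer_nested [DecidableEq α]
    (V : Finset α) (L : Finset (Finset α))
    (hLne : L.Nonempty) (hLsub : ∀ X ∈ L, X ⊆ V)
    (hUnion : ∀ X ∈ L, ∀ Y ∈ L, X ∪ Y ∈ L)
    (hInter : ∀ X ∈ L, ∀ Y ∈ L, X ∩ Y ∈ L)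
    (h₁ h₂ : Finset α → ℝ)
    (hsub : ∀ X ∈ L, ∀ Y ∈ L, h₁ X + h₁ Y ≥ h₁ (X ∪ Y) + h₁ (X ∩ Y))
    (hmap : ∀ X ∈ L, ∀ Y ∈ L, X ⊆ Y → h₁ Y - h₁ X ≥ h₂ Y - h₂ X)
    (X₁ : Finset α)
    (hX₁ : X₁ ∈ L ∧ (∀ X ∈ L, h₁ X₁ ≤ h₁ X) ∧
      (∀ X : Finset α, (X ∈ L ∧ ∀ Y ∈ L, h₁ X ≤ h₁ Y) → X₁ ⊆ X))
    (X₂ : Finset α) (hX₂ : X₂ ∈ L ∧ ∀ X ∈ L, h₂ X₂ ≤ h₂ X) :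
    X₁ ⊆ X₂ := by
  obtain ⟨hX₁L, hX₁min, hX₁least⟩ := hX₁
  obtain ⟨hX₂L, hX₂min⟩ := hX₂
  have hUL : X₁ ∪ X₂ ∈ L := hUnion _ hX₁L _ hX₂L
  have hIL : X₁ ∩ X₂ ∈ L := hInter _ hX₁L _ hX₂L
  -- h₁(X₁ ∪ X₂) ≥ h₁(X₂) via strong map and h₂-minimality of X₂
  have h1 : h₁ (X₁ ∪ X₂) - h₁ X₂ ≥ h₂ (X₁ ∪ X₂) - h₂ X₂ :=
    hmap _ hX₂L _ hUL Finset.subset_union_right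
  have h2 : h₂ X₂ ≤ h₂ (X₁ ∪ X₂) := hX₂min _ hUL
  have h3 : h₁ X₂ ≤ h₁ (X₁ ∪ X₂) := by linarith
  -- submodularity forces X₁ ∩ X₂ to be an h₁-minimizer
  have h4 := hsub _ hX₁L _ hX₂L
  have h5 : h₁ (X₁ ∩ X₂) ≤ h₁ X₁ := by linarith
  have h6 : ∀ Y ∈ L, h₁ (X₁ ∩ X₂) ≤ h₁ Y := fun Y hY =>
    le_trans h5 (hX₁min _ hY)
  have h7 : X₁ ⊆ X₁ ∩ X₂ := hX₁least _ ⟨hIL, h6⟩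
  exact h7.trans Finset.inter_subset_right
end

section
/- Let V be a nonempty finite set, f : 2^V → ℝ a set function with f(∅) = 0, and α ∈ ℝ. Let r : V → ℝ satisfy r(X) ≤ f_α(X) for every nonempty X ⊆ V (i.e., r ∈ P(f_α)), and let Q be a partition of V such that r(C) = f_α(C) for every block C ∈ Q. Then for every nonempty subfamily 𝒳 ⊆ Q with union X̃ = ⊔_{C ∈ 𝒳} C: r(X̃) = Σ_{C ∈ 𝒳} f_α(C) = f̂_α(X̃); in particular, 𝒳 is a minimizing partition achieving the Dilworth truncation f̂_α(X̃), Q minimizes f_α[·] over all partitions of V, and r(V) = f̂_α(V). -/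
open Finset

variable {α : Type*}

/-!
A modular function `r ∈ P(f_α)` bounds every partition sum from below, since it is additive
over the blocks and bounded by `f_α` on each block. A partition on whose blocks `r` is tight
therefore attains this lower bound, so it realises the Dilworth truncation; any subfamily of
`Q` is such a partition of its union.
-/

theorem Finpartition.sum_eq_sum_parts_sum [DecidableEq α] {M : Type*} [AddCommMonoid M]
    {X : Finset α} (P : Finpartition X) (r : α → M) :
    ∑ v ∈ X, r v = ∑ C ∈ P.parts, ∑ v ∈ C, r v := by
  conv_lhs => rw [← P.biUnion_parts]
  exact sum_biUnion P.supIndep.pairwiseDisjoint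

section Dilworth

variable [DecidableEq α] {f : Finset α → ℝ} {V X : Finset α} {a : ℝ} {r : α → ℝ}

theorem sum_le_partSum (hr : ∀ X : Finset α, X ⊆ V → X.Nonempty → ∑ v ∈ X, r v ≤ resFn f V a X)
    (hX : X ⊆ V) (P : Finpartition X) : ∑ v ∈ X, r v ≤ partSum f V a P := by
  rw [P.sum_eq_sum_parts_sum, partSum]
  exact sum_le_sum fun C hC ↦ hr C ((P.le hC).trans hX) (P.nonempty_of_mem_parts hC)

theorem sum_eq_partSum_of_tight (P : Finpartition X)
    (htight : ∀ C ∈ P.parts, ∑ v ∈ C, r v = resFn f V a C) :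
    ∑ v ∈ X, r v = partSum f V a P := by
  rw [P.sum_eq_sum_parts_sum, partSum]
  exact sum_congr rfl htight

theorem dilworth_eq_partSum_of_le (P : Finpartition X)
    (hP : ∀ P' : Finpartition X, partSum f V a P ≤ partSum f V a P') :
    dilworth f V a X = partSum f V a P :=
  IsLeast.csInf_eq ⟨⟨P, rfl⟩, by rintro _ ⟨P', rfl⟩; exact hP P'⟩

theorem dilworth_eq_partSum_of_tight
    (hr : ∀ X : Finset α, X ⊆ V → X.Nonempty → ∑ v ∈ X, r v ≤ resFn f V a X)
    (hX : X ⊆ V) (P : Finpartition X)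
    (htight : ∀ C ∈ P.parts, ∑ v ∈ C, r v = resFn f V a C) :
    dilworth f V a X = partSum f V a P :=
  dilworth_eq_partSum_of_le P fun P' ↦
    sum_eq_partSum_of_tight P htight ▸ sum_le_partSum hr hX P'

end Dilworth

theorem essential_properties_general [DecidableEq α] (V : Finset α)
    (f : Finset α → ℝ) (a : ℝ) (r : α → ℝ)
    (hr : ∀ X : Finset α, X ⊆ V → X.Nonempty → ∑ v ∈ X, r v ≤ resFn f V a X)
    (Q : Finpartition V)
    (htight : ∀ C ∈ Q.parts, ∑ v ∈ C, r v = resFn f V a C) :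
    (∀ S : Finset (Finset α), S ⊆ Q.parts → S.Nonempty →
      (∑ v ∈ S.sup id, r v = ∑ C ∈ S, resFn f V a C ∧
       ∑ C ∈ S, resFn f V a C = dilworth f V a (S.sup id))) ∧
    partSum f V a Q = dilworth f V a V ∧
    ∑ v ∈ V, r v = dilworth f V a V := by
  have hQ := dilworth_eq_partSum_of_tight hr subset_rfl Q htight
  refine ⟨fun S hS _ ↦ ?_, hQ.symm, (sum_eq_partSum_of_tight Q htight).trans hQ.symm⟩
  let P : Finpartition (S.sup id) := Q.ofSubset hS rfl
  have hPtight : ∀ C ∈ P.parts, ∑ v ∈ C, r v = resFn f V a C := fun C hC ↦ htight C (hS hC)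
  have hSV : S.sup id ⊆ V := Finset.sup_le fun C hC ↦ Q.le (hS hC)
  exact ⟨sum_eq_partSum_of_tight P hPtight,
    (dilworth_eq_partSum_of_tight hr hSV P hPtight).symm⟩

/-- Lemma 2(a),(b) (essential properties): if `r ∈ P(f_α)` and `r` is tight on every
block of a partition `Q` of `V`, then for every nonempty subfamily `𝒳 ⊆ Q` with union
`X̃`, `r(X̃) = Σ_{C ∈ 𝒳} f_α(C) = f̂_α(X̃)`; moreover `Q` minimizes `f_α[·]` over all
partitions of `V` and `r(V) = f̂_α(V)`. -/
theorem essential_properties [DecidableEq α] (V : Finset α) (hV : V.Nonempty)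
    (f : Finset α → ℝ) (hf : f ∅ = 0) (a : ℝ) (r : α → ℝ)
    (hr : ∀ X : Finset α, X ⊆ V → X.Nonempty → ∑ v ∈ X, r v ≤ resFn f V a X)
    (Q : Finpartition V)
    (htight : ∀ C ∈ Q.parts, ∑ v ∈ C, r v = resFn f V a C) :
    (∀ S : Finset (Finset α), S ⊆ Q.parts → S.Nonempty →
      (∑ v ∈ S.sup id, r v = ∑ C ∈ S, resFn f V a C ∧
       ∑ C ∈ S, resFn f V a C = dilworth f V a (S.sup id))) ∧
    partSum f V a Q = dilworth f V a V ∧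
    ∑ v ∈ V, r v = dilworth f V a V :=
  essential_properties_general V f a r hr Q htight
end

section
/- Let V be a nonempty finite set, f : 2^V → ℝ a submodular set function with f(∅) = 0, α ∈ ℝ, and i ∈ V. Let r : V → ℝ satisfy r(X) ≤ f_α(X) for every nonempty X ⊆ V, and let Q be a partition of V such that {i} is a block of Q and r(C) = f_α(C) for every block C ∈ Q with C ≠ {i}. Then min{ f_α(X) − r(X) : i ∈ X ⊆ V } = min{ f_α(X̃) − r(X̃) : X̃ is a union of blocks of Q with i ∈ X̃ }; moreover, some minimizer of the left-hand problem is a union of blocks of Q. -/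
open Finset

variable {α : Type*}

lemma resFn_eq [DecidableEq α] (f : Finset α → ℝ) (V : Finset α) (a : ℝ)
    {X : Finset α} (hX : X.Nonempty) : resFn f V a X = f X - f V + a :=
  if_neg hX.ne_empty

section aux
variable [DecidableEq α] {V : Finset α} {f : Finset α → ℝ} {a : ℝ} {i : α} {r : α → ℝ}
  {Q : Finpartition V}

lemma fuse_one
    (hsub : ∀ X Y : Finset α, X ⊆ V → Y ⊆ V → f (X ∪ Y) + f (X ∩ Y) ≤ f X + f Y)
    (hr : ∀ X : Finset α, X ⊆ V → X.Nonempty → ∑ v ∈ X, r v ≤ resFn f V a X)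
    (htight : ∀ C ∈ Q.parts, C ≠ {i} → ∑ v ∈ C, r v = resFn f V a C)
    {Y C : Finset α} (hY : Y ⊆ V) (hiY : i ∈ Y) (hC : C ∈ Q.parts)
    (hYC : (Y ∩ C).Nonempty) :
    resFn f V a (Y ∪ C) - ∑ v ∈ Y ∪ C, r v ≤ resFn f V a Y - ∑ v ∈ Y, r v := by
  by_cases hCi : C = {i}
  · have h : Y ∪ C = Y := by subst hCi; simp [Finset.union_eq_left, hiY]
    rw [h]
  · have hCV : C ⊆ V := Q.le hC
    have hCne : C.Nonempty := Q.nonempty_of_mem_parts hC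
    have hYne : Y.Nonempty := ⟨i, hiY⟩
    have hsum := Finset.sum_union_inter (s₁ := Y) (s₂ := C) (f := r)
    have h1 := hsub Y C hY hCV
    have h2 := hr (Y ∩ C) (Finset.inter_subset_left.trans hY) hYC
    have h3 := htight C hC hCi
    rw [resFn_eq f V a hYC] at h2
    rw [resFn_eq f V a hCne] at h3
    rw [resFn_eq f V a ⟨i, Finset.mem_union_left _ hiY⟩, resFn_eq f V a hYne]
    linarith

lemma fuse_all
    (hsub : ∀ X Y : Finset α, X ⊆ V → Y ⊆ V → f (X ∪ Y) + f (X ∩ Y) ≤ f X + f Y)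
    (hr : ∀ X : Finset α, X ⊆ V → X.Nonempty → ∑ v ∈ X, r v ≤ resFn f V a X)
    (htight : ∀ C ∈ Q.parts, C ≠ {i} → ∑ v ∈ C, r v = resFn f V a C)
    {Y : Finset α} (hY : Y ⊆ V) (hiY : i ∈ Y) :
    ∀ S : Finset (Finset α), S ⊆ Q.parts → (∀ C ∈ S, (Y ∩ C).Nonempty) →
      resFn f V a (Y ∪ S.sup id) - ∑ v ∈ Y ∪ S.sup id, r v ≤
        resFn f V a Y - ∑ v ∈ Y, r v := by
  intro S
  induction S using Finset.induction_on with
  | empty => simp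
  | @insert C S hCS ih =>
    intro hSQ hmeet
    have hC : C ∈ Q.parts := hSQ (Finset.mem_insert_self _ _)
    have hSQ' : S ⊆ Q.parts := (Finset.subset_insert _ _).trans hSQ
    have hY' : Y ∪ S.sup id ⊆ V :=
      Finset.union_subset hY (Finset.sup_le fun D hD => Q.le (hSQ' hD))
    have heq : Y ∪ (insert C S).sup id = (Y ∪ S.sup id) ∪ C := by
      rw [Finset.sup_insert]
      ext x
      simp only [Finset.mem_union, Finset.sup_eq_union, id]
      tauto
    rw [heq]
    have hmeet' : ((Y ∪ S.sup id) ∩ C).Nonempty :=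
      (hmeet C (Finset.mem_insert_self _ _)).mono
        (Finset.inter_subset_inter Finset.subset_union_left le_rfl)
    calc resFn f V a ((Y ∪ S.sup id) ∪ C) - ∑ v ∈ (Y ∪ S.sup id) ∪ C, r v
        ≤ resFn f V a (Y ∪ S.sup id) - ∑ v ∈ Y ∪ S.sup id, r v :=
          fuse_one hsub hr htight hY' (Finset.mem_union_left _ hiY) hC hmeet'
      _ ≤ resFn f V a Y - ∑ v ∈ Y, r v :=
          ih hSQ' (fun D hD => hmeet D (Finset.mem_insert_of_mem hD))

lemma exists_blockunion_le
    (hsub : ∀ X Y : Finset α, X ⊆ V → Y ⊆ V → f (X ∪ Y) + f (X ∩ Y) ≤ f X + f Y)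
    (hr : ∀ X : Finset α, X ⊆ V → X.Nonempty → ∑ v ∈ X, r v ≤ resFn f V a X)
    (htight : ∀ C ∈ Q.parts, C ≠ {i} → ∑ v ∈ C, r v = resFn f V a C)
    {Y : Finset α} (hY : Y ⊆ V) (hiY : i ∈ Y) :
    ∃ X : Finset α, isUnionOfBlocks Q X ∧ i ∈ X ∧
      resFn f V a X - ∑ v ∈ X, r v ≤ resFn f V a Y - ∑ v ∈ Y, r v := by
  classical
  set S : Finset (Finset α) := Q.parts.filter (fun C => (Y ∩ C).Nonempty) with hS
  have hSQ : S ⊆ Q.parts := Finset.filter_subset _ _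
  have hYsub : Y ⊆ S.sup id := by
    intro y hy
    obtain ⟨C, hCQ, hyC⟩ := Q.exists_mem (hY hy)
    have hCS : C ∈ S := Finset.mem_filter.mpr ⟨hCQ, ⟨y, Finset.mem_inter.mpr ⟨hy, hyC⟩⟩⟩
    exact Finset.le_sup (f := id) hCS hyC
  have hunion : Y ∪ S.sup id = S.sup id := Finset.union_eq_right.mpr hYsub
  refine ⟨S.sup id, ⟨S, hSQ, rfl⟩, hYsub hiY, ?_⟩
  have h := fuse_all hsub hr htight hY hiY S hSQ (fun C hCS => (Finset.mem_filter.mp hCS).2)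
  rwa [hunion] at h

end aux

/-- Reduction of the saturation-capacity minimization to unions of blocks
(equality (8b) = (8c) of the paper): the minimum of `f_α(X) − r(X)` over all
`X` with `i ∈ X ⊆ V` equals the minimum over unions of blocks of `Q` containing
`i`, and some minimizer is a union of blocks of `Q`. -/
theorem fusion_reduction [DecidableEq α] (V : Finset α) (hV : V.Nonempty)
    (f : Finset α → ℝ) (hf : f ∅ = 0)
    (hsub : ∀ X Y : Finset α, X ⊆ V → Y ⊆ V → f (X ∪ Y) + f (X ∩ Y) ≤ f X + f Y)
    (a : ℝ) (i : α) (hi : i ∈ V) (r : α → ℝ)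
    (hr : ∀ X : Finset α, X ⊆ V → X.Nonempty → ∑ v ∈ X, r v ≤ resFn f V a X)
    (Q : Finpartition V) (hiQ : {i} ∈ Q.parts)
    (htight : ∀ C ∈ Q.parts, C ≠ {i} → ∑ v ∈ C, r v = resFn f V a C) :
    sInf {y : ℝ | ∃ X : Finset α, X ⊆ V ∧ i ∈ X ∧ y = resFn f V a X - ∑ v ∈ X, r v} =
      sInf {y : ℝ | ∃ X : Finset α, isUnionOfBlocks Q X ∧ i ∈ X ∧
        y = resFn f V a X - ∑ v ∈ X, r v} ∧
    ∃ X : Finset α, isUnionOfBlocks Q X ∧ i ∈ X ∧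
      ∀ Y : Finset α, Y ⊆ V → i ∈ Y →
        resFn f V a X - ∑ v ∈ X, r v ≤ resFn f V a Y - ∑ v ∈ Y, r v := by
  classical
  set g : Finset α → ℝ := fun X => resFn f V a X - ∑ v ∈ X, r v with hg
  set SL : Set ℝ := {y | ∃ X : Finset α, X ⊆ V ∧ i ∈ X ∧ y = g X} with hSL
  set T : Set ℝ := {y | ∃ X : Finset α, isUnionOfBlocks Q X ∧ i ∈ X ∧ y = g X} with hT
  have hVblocks : isUnionOfBlocks Q V := ⟨Q.parts, Finset.Subset.refl _, Q.sup_parts.symm⟩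
  have hblocksub : ∀ X : Finset α, isUnionOfBlocks Q X → X ⊆ V := by
    rintro X ⟨S, hSQ, rfl⟩
    exact Finset.sup_le fun D hD => Q.le (hSQ hD)
  have hTsub : T ⊆ SL := by
    rintro y ⟨X, hX, hiX, rfl⟩
    exact ⟨X, hblocksub X hX, hiX, rfl⟩
  have hSLfin : SL.Finite := by
    have hpow : {X : Finset α | X ⊆ V}.Finite :=
      Set.Finite.ofFinset V.powerset (by simp [Finset.mem_powerset])
    refine (hpow.image g).subset ?_
    rintro y ⟨X, hXV, _, rfl⟩
    exact ⟨X, hXV, rfl⟩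
  have hTfin : T.Finite := hSLfin.subset hTsub
  have hTne : T.Nonempty := ⟨g V, V, hVblocks, hi, rfl⟩
  have hSLne : SL.Nonempty := ⟨g V, V, Finset.Subset.refl _, hi, rfl⟩
  -- minimizer
  obtain ⟨X0, hX0blocks, hiX0, hX0⟩ :
      ∃ X : Finset α, isUnionOfBlocks Q X ∧ i ∈ X ∧ g X = sInf T := by
    have := hTne.csInf_mem hTfin
    obtain ⟨X, h1, h2, h3⟩ := this
    exact ⟨X, h1, h2, h3.symm⟩
  have hmin : ∀ Y : Finset α, Y ⊆ V → i ∈ Y → g X0 ≤ g Y := by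
    intro Y hY hiY
    obtain ⟨X', hX'b, hiX', hle⟩ := exists_blockunion_le hsub hr htight hY hiY
    have : g X' ∈ T := ⟨X', hX'b, hiX', rfl⟩
    have h4 : sInf T ≤ g X' := csInf_le hTfin.bddBelow this
    rw [hX0]
    exact h4.trans hle
  refine ⟨le_antisymm (csInf_le_csInf hSLfin.bddBelow hTne hTsub) ?_,
    X0, hX0blocks, hiX0, hmin⟩
  obtain ⟨Y, hY, hiY, hYeq⟩ := hSLne.csInf_mem hSLfin
  rw [hYeq]
  have := hmin Y hY hiY
  calc sInf T = g X0 := hX0.symm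
    _ ≤ g Y := this
end

section
/- Let V be a nonempty finite set, f : 2^V → ℝ a set function with f(∅) = 0, and α < α' real numbers. If P is a minimizer of f_α[·] over all partitions of V and P' is a minimizer of f_{α'}[·] over all partitions of V, then |P| ≥ |P'|; i.e., the number of blocks of minimizing partitions is nonincreasing in α. -/
open Finset

variable {α : Type*}

lemma partSum_eq [DecidableEq α] (f : Finset α → ℝ) (V : Finset α) (a : ℝ)
    (P : Finpartition V) :
    partSum f V a P = (∑ C ∈ P.parts, (f C - f V)) + a * P.parts.card := by
  unfold partSum resFn
  rw [Finset.sum_congr rfl (fun C hC => if_neg (Finset.nonempty_iff_ne_empty.mp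
    (P.nonempty_of_mem_parts hC)))]
  rw [Finset.sum_add_distrib, Finset.sum_const, nsmul_eq_mul, mul_comm]

/-- The number of blocks of minimizing partitions of `f_α[·]` is nonincreasing in `α`
(part of the structure of the principal sequence of partitions). -/
theorem minimizing_partition_card_antitone [DecidableEq α] (V : Finset α) (hV : V.Nonempty)
    (f : Finset α → ℝ) (hf : f ∅ = 0) (a a' : ℝ) (haa' : a < a')
    (P P' : Finpartition V)
    (hP : ∀ Q : Finpartition V, partSum f V a P ≤ partSum f V a Q)
    (hP' : ∀ Q : Finpartition V, partSum f V a' P' ≤ partSum f V a' Q) :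
    P'.parts.card ≤ P.parts.card := by
  have h1 := hP P'
  have h2 := hP' P
  rw [partSum_eq, partSum_eq] at h1 h2
  by_contra h
  push_neg at h
  have : (P.parts.card : ℝ) < P'.parts.card := by exact_mod_cast h
  nlinarith
end

section
/- Let V be a nonempty finite set, f : 2^V → ℝ a set function with f(∅) = 0, and α₁ < α₂ real numbers. Let P be a minimizer of f_{α₁}[·] over all partitions of V and P' a minimizer of f_{α₂}[·] over all partitions of V, and suppose |P| > |P'|. Define α* = f(V) − (f[P] − f[P'])/(|P| − |P'|), where f[P] = Σ_{C ∈ P} f(C). Then α₁ ≤ α* ≤ α₂, and the two partitions have equal partition-function value at α*: f_{α*}[P] = f_{α*}[P']. -/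
open Finset

variable {α : Type*}

/-!
On a partition `Q` of `V`, `f_α[Q] = f[Q] + |Q| (α - f(V))` is affine in `α` with slope `|Q|`.
Hence `f_α[P] - f_α[P'] = (|P| - |P'|)(α - α*)`: the two lines cross exactly at `α*`, and since
the difference is `≤ 0` at `α₁` and `≥ 0` at `α₂` with positive slope, `α₁ ≤ α* ≤ α₂`.
-/

theorem partSum_eq_sum_add_card_mul [DecidableEq α] (f : Finset α → ℝ) (V : Finset α) (a : ℝ)
    {X : Finset α} (Q : Finpartition X) :
    partSum f V a Q = ∑ C ∈ Q.parts, f C + #Q.parts * (a - f V) := by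
  have hres : ∀ C ∈ Q.parts, resFn f V a C = f C + (a - f V) := fun C hC => by
    rw [resFn, if_neg (show C ≠ ∅ from Q.ne_bot hC)]
    ring
  rw [partSum, sum_congr rfl hres, sum_add_distrib, sum_const, nsmul_eq_mul]

theorem partSum_sub_partSum [DecidableEq α] (f : Finset α → ℝ) (V : Finset α) (a : ℝ)
    {X : Finset α} (P P' : Finpartition X) (hcard : #P'.parts ≠ #P.parts) :
    partSum f V a P - partSum f V a P' =
      ((#P.parts : ℝ) - #P'.parts) *
        (a - (f V - ((∑ C ∈ P.parts, f C) - ∑ C ∈ P'.parts, f C) /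
          ((#P.parts : ℝ) - #P'.parts))) := by
  have hne : (#P.parts : ℝ) - #P'.parts ≠ 0 := sub_ne_zero.mpr (by exact_mod_cast hcard.symm)
  rw [partSum_eq_sum_add_card_mul, partSum_eq_sum_add_card_mul]
  field_simp
  ring

theorem critical_value_location_general [DecidableEq α] (V : Finset α)
    (f : Finset α → ℝ) (a₁ a₂ : ℝ)
    (P P' : Finpartition V)
    (hP : ∀ Q : Finpartition V, partSum f V a₁ P ≤ partSum f V a₁ Q)
    (hP' : ∀ Q : Finpartition V, partSum f V a₂ P' ≤ partSum f V a₂ Q)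
    (hcard : P'.parts.card < P.parts.card) :
    ∀ astar : ℝ,
      astar = f V - ((∑ C ∈ P.parts, f C) - ∑ C ∈ P'.parts, f C) /
        ((P.parts.card : ℝ) - (P'.parts.card : ℝ)) →
      a₁ ≤ astar ∧ astar ≤ a₂ ∧ partSum f V astar P = partSum f V astar P' := by
  intro astar hstar
  have hslope : 0 < (#P.parts : ℝ) - #P'.parts := sub_pos.mpr (by exact_mod_cast hcard)
  have hdiff : ∀ a, partSum f V a P - partSum f V a P' =
      ((#P.parts : ℝ) - #P'.parts) * (a - astar) := fun a => by
    rw [hstar]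
    exact partSum_sub_partSum f V a P P' hcard.ne
  refine ⟨?_, ?_, ?_⟩
  · have h₁ := sub_nonpos.mpr (hP P')
    rw [hdiff] at h₁
    exact sub_nonpos.mp (nonpos_of_mul_nonpos_right h₁ hslope)
  · have h₂ := sub_nonneg.mpr (hP' P)
    rw [hdiff] at h₂
    exact sub_nonneg.mp (nonneg_of_mul_nonneg_right h₂ hslope)
  · rw [← sub_eq_zero, hdiff, sub_self, mul_zero]

/-- Lemma 8 (locating critical values of the PSP): if `P` minimizes `f_{α₁}[·]`,
`P'` minimizes `f_{α₂}[·]`, `α₁ < α₂` and `|P| > |P'|`, then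
`α* = f(V) − (f[P] − f[P'])/(|P| − |P'|)` lies in `[α₁, α₂]` and
`f_{α*}[P] = f_{α*}[P']`. -/
theorem critical_value_location [DecidableEq α] (V : Finset α) (hV : V.Nonempty)
    (f : Finset α → ℝ) (hf : f ∅ = 0) (a₁ a₂ : ℝ) (h12 : a₁ < a₂)
    (P P' : Finpartition V)
    (hP : ∀ Q : Finpartition V, partSum f V a₁ P ≤ partSum f V a₁ Q)
    (hP' : ∀ Q : Finpartition V, partSum f V a₂ P' ≤ partSum f V a₂ Q)
    (hcard : P'.parts.card < P.parts.card) :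
    ∀ astar : ℝ,
      astar = f V - ((∑ C ∈ P.parts, f C) - ∑ C ∈ P'.parts, f C) /
        ((P.parts.card : ℝ) - (P'.parts.card : ℝ)) →
      a₁ ≤ astar ∧ astar ≤ a₂ ∧ partSum f V astar P = partSum f V astar P' :=
  critical_value_location_general V f a₁ a₂ P P' hP hP' hcard
end

section
/- Let V be a nonempty finite set, f : 2^V → ℝ a submodular set function with f(∅) = 0, and α ≤ α' real numbers. If P is a minimizer of f_α[·] over all partitions of V that refines every minimizer of f_α[·] (the finest minimizer), and P' is likewise the finest minimizer of f_{α'}[·], then P refines P' (P ≼ P'). In particular, the finest minimizers {Q_α} over all α form a chain in the partition lattice of V, ordered by refinement, which gets coarser as α increases. -/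
/-!
Let `P` be the finest minimizer at level `a` and `P'` any minimizer at level `a' ≥ a`. Cutting a
block `C` of `P` along the blocks `B₁, …, B_k` of `P'` that meet it does not increase `f_a`:
by submodularity `Σ f(C ∩ Bᵢ) ≤ f C + Σ f Bᵢ - f(⋃ Bᵢ)`, and since `P'` is a minimizer, merging the
`Bᵢ` does not help, i.e. `Σ f_{a'}(Bᵢ) ≤ f_{a'}(⋃ Bᵢ)`. Together these give
`Σ f_a(C ∩ Bᵢ) ≤ f_a(C) - (k - 1)(a' - a) ≤ f_a(C)`. Hence the common refinement `P ⊓ P'` is also a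
minimizer at level `a`, so `P` refines it, and therefore refines `P'`.
-/

open Finset

variable {α : Type*}

/-- `P` refines `P'`: every block of `P` is contained in some block of `P'`. -/
def refines [DecidableEq α] {V : Finset α} (P P' : Finpartition V) : Prop :=
  ∀ C ∈ P.parts, ∃ C' ∈ P'.parts, C ⊆ C'

namespace Finpartition

variable [DistribLattice α] [OrderBot α] {s : α}

lemma disjoint_sup_of_notMem {P : Finpartition s} {M : Finset α} (hM : M ⊆ P.parts) {b : α}
    (hb : b ∈ P.parts) (hbM : b ∉ M) : Disjoint (M.sup id) b :=
  Finset.disjoint_sup_left.2 fun _ hc => P.disjoint (hM hc) hb fun h => hbM (h ▸ hc)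

variable [DecidableEq α]

lemma sum_inf_parts {M : Type*} [AddCommMonoid M] (P Q : Finpartition s) (g : α → M)
    (hg : g ⊥ = 0) :
    ∑ x ∈ (P ⊓ Q).parts, g x = ∑ b ∈ P.parts, ∑ c ∈ Q.parts, g (b ⊓ c) := by
  rw [parts_inf, sum_erase _ hg, sum_image_of_disjoint hg, sum_product]
  rintro ⟨b, c⟩ hbc ⟨b', c'⟩ hbc' hne
  simp only [coe_product, Set.mem_prod, mem_coe] at hbc hbc'
  by_cases hb : b = b'
  · have hc : c ≠ c' := fun hc => hne (by rw [hb, hc])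
    exact (Q.disjoint hbc.2 hbc'.2 hc).mono inf_le_right inf_le_right
  · exact (P.disjoint hbc.1 hbc'.1 hb).mono inf_le_left inf_le_left

def mergeParts (P : Finpartition s) (M : Finset α) (hM : M ⊆ P.parts) : Finpartition s :=
  (ofPairwiseDisjoint (insert (M.sup id) (P.parts \ M)) (by
    rw [coe_insert]
    refine (P.disjoint.subset (by simp)).insert fun b hb _ => ?_
    have hb := mem_sdiff.1 hb
    exact disjoint_sup_of_notMem hM hb.1 hb.2)).copy (by
    rw [sup_insert, id, ← sup_union, union_sdiff_of_subset hM, P.sup_parts])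

lemma sum_mergeParts {N : Type*} [AddCommMonoid N] (P : Finpartition s) {M : Finset α}
    (hM : M ⊆ P.parts) (hMne : M.Nonempty) (g : α → N) (hg : g ⊥ = 0) :
    ∑ x ∈ (P.mergeParts M hM).parts, g x = g (M.sup id) + ∑ x ∈ P.parts \ M, g x := by
  rw [mergeParts, copy_parts, sum_ofPairwiseDisjoint_eq_sum _ hg, sum_insert]
  intro hsup
  obtain ⟨b, hb⟩ := hMne
  have hdisj := disjoint_sup_of_notMem hM (mem_sdiff.1 hsup).1 (mem_sdiff.1 hsup).2
  have hbM : b ≤ M.sup id := le_sup (f := id) hb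
  exact P.ne_bot (hM hb) (disjoint_self.1 (hdisj.mono hbM hbM))

end Finpartition

section Submodular

variable [DecidableEq α] {f : Finset α → ℝ} {V : Finset α}

lemma submodular_union_sup_add_sum_inter_le
    (hsub : ∀ X Y : Finset α, X ⊆ V → Y ⊆ V → f (X ∪ Y) + f (X ∩ Y) ≤ f X + f Y)
    {C : Finset α} (hC : C ⊆ V) (M : Finset (Finset α)) (hMV : ∀ B ∈ M, B ⊆ V)
    (hdisj : (M : Set (Finset α)).PairwiseDisjoint id) :
    f (C ∪ M.sup id) + ∑ B ∈ M, f (C ∩ B) ≤ f C + ∑ B ∈ M, f B := by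
  induction M using Finset.induction_on with
  | empty => simp
  | @insert B M hBM ih =>
    have hMV' : ∀ B' ∈ M, B' ⊆ V := fun B' h => hMV B' (mem_insert_of_mem h)
    have ih := ih hMV' (hdisj.subset (by simp))
    have hsupV : M.sup id ⊆ V := Finset.sup_le hMV'
    have hBsup : Disjoint (M.sup id) B := Finset.disjoint_sup_left.2 fun B' hB' =>
      hdisj (mem_insert_of_mem hB') (mem_insert_self _ _) fun h => hBM (h ▸ hB')
    have hinter : (C ∪ M.sup id) ∩ B = C ∩ B := by
      rw [union_inter_distrib_right, disjoint_iff_inter_eq_empty.1 hBsup, union_empty]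
    have hunion : C ∪ M.sup id ∪ B = C ∪ (insert B M).sup id := by
      rw [sup_insert, id, sup_eq_union, union_comm B, union_assoc]
    have hstep := hsub (C ∪ M.sup id) B (union_subset hC hsupV) (hMV B (mem_insert_self _ _))
    rw [hinter, hunion] at hstep
    rw [sum_insert hBM, sum_insert hBM]
    linarith

end Submodular

section Residual

variable [DecidableEq α] (f : Finset α → ℝ) (V : Finset α) (a : ℝ)

@[simp]
lemma resFn_empty : resFn f V a ∅ = 0 := if_pos rfl

lemma resFn_of_nonempty {X : Finset α} (hX : X.Nonempty) : resFn f V a X = f X - f V + a :=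
  if_neg hX.ne_empty

lemma sum_resFn_of_nonempty {ι : Type*} (s : Finset ι) {g : ι → Finset α}
    (hg : ∀ i ∈ s, (g i).Nonempty) :
    ∑ i ∈ s, resFn f V a (g i) = ∑ i ∈ s, f (g i) + #s * (a - f V) := by
  rw [sum_congr rfl fun i hi => resFn_of_nonempty f V a (hg i hi)]
  simp only [sum_add_distrib, sum_sub_distrib, sum_const, nsmul_eq_mul]
  ring

variable {f V a}

lemma sum_resFn_le_resFn_sup_of_minimizer {P : Finpartition V}
    (hmin : ∀ Q : Finpartition V, partSum f V a P ≤ partSum f V a Q)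
    {M : Finset (Finset α)} (hM : M ⊆ P.parts) (hMne : M.Nonempty) :
    ∑ B ∈ M, resFn f V a B ≤ resFn f V a (M.sup id) := by
  have hmerge := hmin (P.mergeParts M hM)
  rw [partSum, partSum, P.sum_mergeParts hM hMne _ (resFn_empty f V a), ← sum_sdiff hM] at hmerge
  linarith

lemma sum_resFn_inter_le_of_minimizer
    (hsub : ∀ X Y : Finset α, X ⊆ V → Y ⊆ V → f (X ∪ Y) + f (X ∩ Y) ≤ f X + f Y)
    {a' : ℝ} (ha : a ≤ a') {P' : Finpartition V}
    (hmin : ∀ Q : Finpartition V, partSum f V a' P' ≤ partSum f V a' Q)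
    {C : Finset α} (hC : C ⊆ V) (hCne : C.Nonempty) :
    ∑ B ∈ P'.parts, resFn f V a (C ∩ B) ≤ resFn f V a C := by
  set M := P'.parts.filter fun B => (C ∩ B).Nonempty
  have hMsub : M ⊆ P'.parts := filter_subset _ _
  have hcover : ∀ x ∈ C, ∃ B ∈ M, x ∈ B := fun x hx => by
    obtain ⟨B, hB, hxB⟩ := P'.exists_mem (hC hx)
    exact ⟨B, mem_filter.2 ⟨hB, x, mem_inter.2 ⟨hx, hxB⟩⟩, hxB⟩
  have hCM : C ⊆ M.sup id := fun x hx => by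
    obtain ⟨B, hB, hxB⟩ := hcover x hx
    exact mem_sup.2 ⟨B, hB, hxB⟩
  have hMne : M.Nonempty :=
    let ⟨x, hx⟩ := hCne
    (hcover x hx).imp fun _ => And.left
  have htel := submodular_union_sup_add_sum_inter_le hsub hC M
    (fun B hB => P'.le (hMsub hB)) (P'.disjoint.subset (by simpa using hMsub))
  rw [union_eq_right.2 hCM] at htel
  have hmerge := sum_resFn_le_resFn_sup_of_minimizer hmin hMsub hMne
  rw [sum_resFn_of_nonempty f V a' M fun B hB => P'.nonempty_of_mem_parts (hMsub hB),
    resFn_of_nonempty f V a' (hCne.mono hCM)] at hmerge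
  have hfilter : ∑ B ∈ M, resFn f V a (C ∩ B) = ∑ B ∈ P'.parts, resFn f V a (C ∩ B) :=
    sum_filter_of_ne fun B _ h => nonempty_iff_ne_empty.2 fun hB => h (by rw [hB, resFn_empty])
  rw [← hfilter, sum_resFn_of_nonempty f V a M fun B hB => (mem_filter.1 hB).2,
    resFn_of_nonempty f V a hCne]
  have hk : (1 : ℝ) ≤ #M := by exact_mod_cast hMne.card_pos
  nlinarith

end Residual

lemma refines_iff_le [DecidableEq α] {V : Finset α} {P Q : Finpartition V} :
    refines P Q ↔ P ≤ Q :=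
  ⟨fun h _ hC => h _ hC, fun h _ hC => h hC⟩

theorem finest_minimizers_chain_general [DecidableEq α] (V : Finset α)
    (f : Finset α → ℝ)
    (hsub : ∀ X Y : Finset α, X ⊆ V → Y ⊆ V → f (X ∪ Y) + f (X ∩ Y) ≤ f X + f Y)
    (a a' : ℝ) (haa' : a ≤ a') (P P' : Finpartition V)
    (hPmin : ∀ Q : Finpartition V, partSum f V a P ≤ partSum f V a Q)
    (hPfinest : ∀ Q : Finpartition V,
      (∀ R : Finpartition V, partSum f V a Q ≤ partSum f V a R) → refines P Q)
    (hP'min : ∀ Q : Finpartition V, partSum f V a' P' ≤ partSum f V a' Q) :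
    refines P P' := by
  have hinf : partSum f V a (P ⊓ P') ≤ partSum f V a P := by
    rw [partSum, partSum, Finpartition.sum_inf_parts _ _ _ (resFn_empty f V a)]
    exact sum_le_sum fun C hC =>
      sum_resFn_inter_le_of_minimizer hsub haa' hP'min (P.le hC) (P.nonempty_of_mem_parts hC)
  have hPinf : refines P (P ⊓ P') := hPfinest _ fun R => hinf.trans (hPmin R)
  exact refines_iff_le.2 ((refines_iff_le.1 hPinf).trans inf_le_right)

/-- The finest minimizers of `f_α[·]` form a chain in the partition lattice,
getting coarser as `α` increases (equation (4), the PSP, of the paper). -/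
theorem finest_minimizers_chain [DecidableEq α] (V : Finset α) (hV : V.Nonempty)
    (f : Finset α → ℝ) (hf : f ∅ = 0)
    (hsub : ∀ X Y : Finset α, X ⊆ V → Y ⊆ V → f (X ∪ Y) + f (X ∩ Y) ≤ f X + f Y)
    (a a' : ℝ) (haa' : a ≤ a') (P P' : Finpartition V)
    (hPmin : ∀ Q : Finpartition V, partSum f V a P ≤ partSum f V a Q)
    (hPfinest : ∀ Q : Finpartition V,
      (∀ R : Finpartition V, partSum f V a Q ≤ partSum f V a R) → refines P Q)
    (hP'min : ∀ Q : Finpartition V, partSum f V a' P' ≤ partSum f V a' Q)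
    (hP'finest : ∀ Q : Finpartition V,
      (∀ R : Finpartition V, partSum f V a' Q ≤ partSum f V a' R) → refines P' Q) :
    refines P P' :=
  finest_minimizers_chain_general V f hsub a a' haa' P P' hPmin hPfinest hP'min
end

section
/- Let V be a finite set with |V| ≥ 2, f : 2^V → ℝ a set function with f(∅) = 0, and α ∈ ℝ. Then the trivial partition {V} is a minimizer of f_α[·] over all partitions of V if and only if α ≥ max over partitions P of V with |P| ≥ 2 of Σ_{C ∈ P} (f(V) − f(C))/(|P| − 1). Consequently, for such α, f̂_α(V) = α. -/
open Finset

variable {α : Type*}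

/-- The trivial partition `{V}` minimizes `f_α[·]` iff `α` exceeds the minimum
sum-rate `max_{P : |P| ≥ 2} Σ_{C ∈ P} (f(V) − f(C))/(|P| − 1)`; for such `α`,
`f̂_α(V) = α`. -/
theorem trivial_partition_minimizer_iff [DecidableEq α] (V : Finset α) (hV : 2 ≤ V.card)
    (f : Finset α → ℝ) (hf : f ∅ = 0) (a : ℝ)
    (P₀ : Finpartition V) (hP₀ : P₀.parts = {V}) :
    ((∀ P : Finpartition V, partSum f V a P₀ ≤ partSum f V a P) ↔
      sSup {y : ℝ | ∃ P : Finpartition V, 2 ≤ P.parts.card ∧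
        y = ∑ C ∈ P.parts, (f V - f C) / ((P.parts.card : ℝ) - 1)} ≤ a) ∧
    (sSup {y : ℝ | ∃ P : Finpartition V, 2 ≤ P.parts.card ∧
        y = ∑ C ∈ P.parts, (f V - f C) / ((P.parts.card : ℝ) - 1)} ≤ a →
      dilworth f V a V = a) := by
  have hVne : V ≠ ∅ := by
    intro h; rw [h] at hV; simp at hV
  have hP0sum : partSum f V a P₀ = a := by
    simp [partSum, hP₀, resFn, hVne]
  set S := {y : ℝ | ∃ P : Finpartition V, 2 ≤ P.parts.card ∧
      y = ∑ C ∈ P.parts, (f V - f C) / ((P.parts.card : ℝ) - 1)} with hSdef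
  have hSsub : S ⊆ (fun Q : Finset (Finset α) =>
      ∑ C ∈ Q, (f V - f C) / ((Q.card : ℝ) - 1)) '' ↑(V.powerset.powerset) := by
    rintro y ⟨P, hcard, rfl⟩
    refine ⟨P.parts, ?_, rfl⟩
    simp only [Finset.mem_coe, Finset.mem_powerset]
    intro C hC
    exact Finset.mem_powerset.2 (P.le hC)
  have hSfin : S.Finite :=
    Set.Finite.subset ((V.powerset.powerset).finite_toSet.image _) hSsub
  have hSbdd : BddAbove S := hSfin.bddAbove
  have hSne : S.Nonempty := by
    refine ⟨_, (⊥ : Finpartition V), ?_, rfl⟩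
    rw [Finpartition.card_bot]; exact hV
  have hsum : ∀ P : Finpartition V, partSum f V a P =
      ∑ C ∈ P.parts, (f C - f V + a) := by
    intro P
    refine Finset.sum_congr rfl fun C hC => ?_
    have hne : C ≠ ∅ := by
      have := P.ne_bot hC
      simpa using this
    simp [resFn, hne]
  have hmain : ∀ P : Finpartition V, 2 ≤ P.parts.card →
      (a ≤ partSum f V a P ↔
        ∑ C ∈ P.parts, (f V - f C) / ((P.parts.card : ℝ) - 1) ≤ a) := by
    intro P hk
    have hk1 : (0:ℝ) < (P.parts.card : ℝ) - 1 := by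
      have : (2:ℝ) ≤ (P.parts.card : ℝ) := by exact_mod_cast hk
      linarith
    rw [hsum P, ← Finset.sum_div, div_le_iff₀ hk1]
    have e1 : ∑ C ∈ P.parts, (f C - f V + a) =
        (∑ C ∈ P.parts, f C) - (P.parts.card : ℝ) * f V + (P.parts.card : ℝ) * a := by
      rw [Finset.sum_add_distrib, Finset.sum_sub_distrib, Finset.sum_const, Finset.sum_const,
        nsmul_eq_mul, nsmul_eq_mul]
    have e2 : ∑ C ∈ P.parts, (f V - f C) =
        (P.parts.card : ℝ) * f V - ∑ C ∈ P.parts, f C := by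
      rw [Finset.sum_sub_distrib, Finset.sum_const, nsmul_eq_mul]
    rw [e1, e2]
    constructor <;> intro h <;> linarith
  have hiff : (∀ P : Finpartition V, partSum f V a P₀ ≤ partSum f V a P) ↔ sSup S ≤ a := by
    constructor
    · intro hmin
      refine csSup_le hSne ?_
      rintro y ⟨P, hk, rfl⟩
      exact (hmain P hk).1 (le_of_eq_of_le hP0sum.symm (hmin P))
    · intro hsup P
      rw [hP0sum]
      by_cases h2 : 2 ≤ P.parts.card
      · exact (hmain P h2).2 (le_trans (le_csSup hSbdd ⟨P, h2, rfl⟩) hsup)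
      · have hne : P.parts.Nonempty := P.parts_nonempty (by simpa using hVne)
        have h1 : P.parts.card = 1 := by
          have := Finset.card_pos.2 hne
          omega
        obtain ⟨C, hC⟩ := Finset.card_eq_one.1 h1
        have hCV : C = V := by
          have := P.sup_parts
          rw [hC, Finset.sup_singleton] at this
          simpa using this
        rw [partSum, hC, hCV, Finset.sum_singleton]
        simp [resFn, hVne]
  refine ⟨hiff, fun hsup => ?_⟩
  have hmin := hiff.2 hsup
  refine IsLeast.csInf_eq ⟨⟨P₀, hP0sum⟩, ?_⟩
  rintro y ⟨P, rfl⟩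
  calc a = partSum f V a P₀ := hP0sum.symm
    _ ≤ _ := hmin P
end

section
/- Let V be a finite set, f : 2^V → ℝ a set function, i ∈ V, and (r_λ)_{λ ∈ ℝ} a family of vectors r_λ : V → ℝ. Let λ₁ < λ₂, let U be a minimizer of X ↦ f(X) − r_{λ₁}(X) over {X : i ∈ X ⊆ V}, let U' be a minimizer of X ↦ f(X) − r_{λ₂}(X) over the same family, and suppose U' ⊊ U. Assume the map λ ↦ r_λ(U \ U') = Σ_{m ∈ U \ U'} r_λ(m) is strictly decreasing in λ. If λ ∈ ℝ satisfies r_λ(U \ U') = f(U) − f(U'), then λ₁ ≤ λ ≤ λ₂. -/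
open Finset

variable {α : Type*}

/-- Lemma 12 (lemma:PPKomo): locating the critical values of the nested minimal
minimizers in Kolmogorov's parametric algorithm. If `U` minimizes
`X ↦ f(X) − r_{λ₁}(X)` over `{X : i ∈ X ⊆ V}`, `U'` minimizes the same at `λ₂`,
`U' ⊊ U`, `λ ↦ r_λ(U \ U')` is strictly decreasing, and
`r_λ(U \ U') = f(U) − f(U')`, then `λ₁ ≤ λ ≤ λ₂`. -/
theorem kolmogorov_critical_value [DecidableEq α] (V : Finset α)
    (f : Finset α → ℝ) (i : α) (hi : i ∈ V)
    (r : ℝ → α → ℝ) (l₁ l₂ : ℝ) (h12 : l₁ < l₂) (U U' : Finset α)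
    (hU : i ∈ U ∧ U ⊆ V ∧ ∀ X : Finset α, i ∈ X → X ⊆ V →
      f U - ∑ m ∈ U, r l₁ m ≤ f X - ∑ m ∈ X, r l₁ m)
    (hU' : i ∈ U' ∧ U' ⊆ V ∧ ∀ X : Finset α, i ∈ X → X ⊆ V →
      f U' - ∑ m ∈ U', r l₂ m ≤ f X - ∑ m ∈ X, r l₂ m)
    (hUU' : U' ⊂ U)
    (hdec : StrictAnti (fun l : ℝ => ∑ m ∈ U \ U', r l m))
    (l : ℝ) (hl : ∑ m ∈ U \ U', r l m = f U - f U') :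
    l₁ ≤ l ∧ l ≤ l₂ := by
  obtain ⟨hiU, hUV, hminU⟩ := hU
  obtain ⟨hiU', hU'V, hminU'⟩ := hU'
  have hsub : U' ⊆ U := hUU'.subset
  have hsplit : ∀ l' : ℝ, ∑ m ∈ U \ U', r l' m = (∑ m ∈ U, r l' m) - ∑ m ∈ U', r l' m := by
    intro l'
    have := Finset.sum_sdiff (f := r l') hsub
    linarith
  have h1 : f U - f U' ≤ ∑ m ∈ U \ U', r l₁ m := by
    have := hminU U' hiU' hU'V
    rw [hsplit]; linarith
  have h2 : ∑ m ∈ U \ U', r l₂ m ≤ f U - f U' := by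
    have := hminU' U hiU (hUV)
    rw [hsplit]; linarith
  constructor
  · by_contra h
    push_neg at h
    have := hdec h
    simp only at this
    linarith
  · by_contra h
    push_neg at h
    have := hdec h
    simp only at this
    linarith
end
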